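/- arXiv:1908.00750 — 5 statements merged into one kernel-verified Lean document; each statement's English description precedes it below -/
import Mathlib

section
/- Let K be a field of characteristic zero containing all roots of unity, and let C be a smooth conic over K with no K-points. Then every non-trivial automorphism of C over K of finite order has order 2. -/
/-!
Rescaling a similitude `A` with multiplier `c` of a nondegenerate ternary form gives an
isometry: comparing determinants in `Aᵀ G A = c G` yields `det A ^ 2 = c ^ 3`, so `c` is a
square. If the class of the isometry `B` has order `k` in `PGL₃`, then `B ^ k` is a scalar
isometry, hence `± 1` because the form is anisotropic, and `B ^ (2 k) = 1`. Since `K` contains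
the `2 k`-th roots of unity, the minimal polynomial of `B` splits with simple roots; these are
eigenvalues of an isometry of an anisotropic form, hence `± 1`, so `B ^ 2 = 1`.
-/

open Matrix Polynomial

section Isometry

variable {K V : Type*} [Field K] [AddCommGroup V] [Module K V] {Q : QuadraticForm K V}
  {f : Module.End K V}

theorem QuadraticMap.Anisotropic.sq_eq_one_of_hasEigenvector (hQ : Q.Anisotropic)
    (hf : ∀ v, Q (f v) = Q v) {r : K} {v : V} (hv : f.HasEigenvector r v) : r ^ 2 = 1 := by
  have hQv : Q v ≠ 0 := fun h => hv.2 (hQ v h)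
  have h := hf v
  rw [hv.apply_eq_smul, QuadraticMap.map_smul, smul_eq_mul] at h
  have : (r ^ 2 - 1) * Q v = 0 := by linear_combination h
  exact sub_eq_zero.mp ((mul_eq_zero.mp this).resolve_right hQv)

theorem QuadraticMap.Anisotropic.sq_eq_one_of_pow_eq_one [FiniteDimensional K V]
    (hQ : Q.Anisotropic) (hf : ∀ v, Q (f v) = Q v) {m : ℕ} [NeZero m] {ζ : K}
    (hζ : IsPrimitiveRoot ζ m) (hfm : f ^ m = 1) : f ^ 2 = 1 := by
  set p := minpoly K f
  have hp_dvd : p ∣ X ^ m - C 1 := minpoly.dvd_iff.mpr (by simp [hfm])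
  have hp_sep : p.Separable :=
    (X_pow_sub_one_separable_iff.mpr hζ.neZero'.out).of_dvd (by simpa using hp_dvd)
  have hp_splits : p.Splits :=
    (X_pow_sub_one_splits hζ).of_dvd (X_pow_sub_C_ne_zero (NeZero.pos m) 1) hp_dvd
  -- the roots of `p` are eigenvalues of the isometry `f`, hence square roots of `1`
  have hp_roots : p.roots ≤ (X ^ 2 - C 1 : K[X]).roots := by
    rw [Multiset.le_iff_subset (nodup_roots hp_sep)]
    intro r hr
    obtain ⟨v, hv⟩ := (Module.End.hasEigenvalue_iff_isRoot.mpr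
      (isRoot_of_mem_roots hr)).exists_hasEigenvector
    exact (mem_roots (X_pow_sub_C_ne_zero two_pos 1)).mpr
      (by simp [hQ.sq_eq_one_of_hasEigenvector hf hv])
  have := minpoly.dvd_iff.mp <| hp_splits.dvd_of_roots_le_roots
    (minpoly.ne_zero (Algebra.IsIntegral.isIntegral f)) hp_roots
  simpa [sub_eq_zero] using this

end Isometry

section Matrix

variable {K n : Type*} [Field K] [Fintype n] [DecidableEq n] {q : QuadraticForm K (n → K)}

theorem Matrix.det_sq_eq_pow_card_of_similitude
    (hq : (QuadraticMap.polarBilin q).Nondegenerate) {M : Matrix n n K} {c : K}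
    (hM : ∀ v, q (M *ᵥ v) = c * q v) : M.det ^ 2 = c ^ Fintype.card n := by
  set G := LinearMap.toMatrix₂' K (QuadraticMap.polarBilin q)
  have hpolar : (QuadraticMap.polarBilin q).compl₁₂ (toLin' M) (toLin' M) =
      c • QuadraticMap.polarBilin q := by
    refine LinearMap.ext₂ fun u v => ?_
    simp only [LinearMap.compl₁₂_apply, toLin'_apply, QuadraticMap.polarBilin_apply_apply,
      QuadraticMap.polar, ← mulVec_add, hM, LinearMap.smul_apply, smul_eq_mul]
    ring
  have hcong : Mᵀ * G * M = c • G := by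
    simpa [LinearMap.toMatrix₂'_compl₁₂] using congrArg (LinearMap.toMatrix₂' K) hpolar
  have hG : G.det ≠ 0 :=
    LinearMap.BilinForm.nondegenerate_toBilin'_iff_det_ne_zero.mp (by simpa [G] using hq)
  have hdet := congrArg det hcong
  rw [det_mul, det_mul, det_transpose, det_smul] at hdet
  exact mul_right_cancel₀ hG (by linear_combination hdet)

theorem Matrix.scalar_mulVec (a : K) (v : n → K) : scalar n a *ᵥ v = a • v := by
  rw [scalar_apply, ← smul_one_eq_diagonal, smul_mulVec, one_mulVec]

theorem Matrix.isometry_pow {M : Matrix n n K} (hM : ∀ v, q (M *ᵥ v) = q v) (k : ℕ)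
    (v : n → K) : q ((M ^ k) *ᵥ v) = q v := by
  induction k generalizing v with
  | zero => simp
  | succ k ih => rw [pow_succ, ← mulVec_mulVec, ih, hM]

theorem Matrix.sq_eq_one_of_isometry_of_pow_eq_one (hq : q.Anisotropic) {M : Matrix n n K}
    (hM : ∀ v, q (M *ᵥ v) = q v) {m : ℕ} [NeZero m] {ζ : K} (hζ : IsPrimitiveRoot ζ m)
    (hMm : M ^ m = 1) : M ^ 2 = 1 := by
  have := hq.sq_eq_one_of_pow_eq_one (f := toLinAlgEquiv' M) hM hζ
    (by rw [← map_pow, hMm, map_one])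
  exact toLinAlgEquiv'.injective (by rwa [map_pow, map_one])

end Matrix

namespace Matrix.GeneralLinearGroup

variable {K n : Type*} [Field K] [Fintype n] [DecidableEq n] {q : QuadraticForm K (n → K)}

theorem exists_isometry_mk_eq_of_odd_card (hn : Odd (Fintype.card n))
    (hq : (QuadraticMap.polarBilin q).Nondegenerate) {A : GL n K} {c : Kˣ}
    (hA : ∀ v, q ((A : Matrix n n K) *ᵥ v) = c * q v) :
    ∃ B : GL n K, (B : GL n K ⧸ Subgroup.center (GL n K)) = A ∧
      ∀ v, q ((B : Matrix n n K) *ᵥ v) = q v := by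
  obtain ⟨k, hk⟩ := hn
  -- `det A ^ 2 = c ^ (2 k + 1)`, so `c` is the square of `e = det A / c ^ k`
  set e : Kˣ := det A / c ^ k
  have he : (e : K) ^ 2 = c := by
    have hdet := det_sq_eq_pow_card_of_similitude hq hA
    rw [hk] at hdet
    simp only [e, Units.val_div_eq_div_val, Units.val_pow_eq_pow_val, val_det_apply, div_pow, hdet]
    field_simp
    ring
  refine ⟨scalar n e⁻¹ * A, ?_, fun v => ?_⟩
  · rw [QuotientGroup.mk_mul, (QuotientGroup.eq_one_iff _).mpr, one_mul]
    rw [center_eq_range_scalar]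
    exact ⟨_, rfl⟩
  · rw [Units.val_mul, ← mulVec_mulVec, coe_scalar, scalar_mulVec,
      QuadraticMap.map_smul, hA, smul_eq_mul, ← he, Units.val_inv_eq_inv_val]
    field_simp

theorem pow_two_mul_orderOf_mk_eq_one [Nonempty n] (hq : q.Anisotropic) {B : GL n K}
    (hB : ∀ v, q ((B : Matrix n n K) *ᵥ v) = q v) :
    B ^ (2 * orderOf (B : GL n K ⧸ Subgroup.center (GL n K))) = 1 := by
  set k := orderOf (B : GL n K ⧸ Subgroup.center (GL n K))
  have hcenter : B ^ k ∈ Subgroup.center (GL n K) := by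
    rw [← QuotientGroup.eq_one_iff, QuotientGroup.mk_pow, pow_orderOf_eq_one]
  obtain ⟨μ, hBk⟩ := center_eq_range_scalar (n := n) (R := K) ▸ hcenter
  have hμ : (μ : K) ^ 2 = 1 := by
    refine hq.sq_eq_one_of_hasEigenvector (f := Matrix.toLin' ((B : Matrix n n K) ^ k))
      (isometry_pow hB k) (v := Pi.single (Classical.arbitrary n) 1) ?_
    rw [Module.End.hasEigenvector_iff, Module.End.mem_eigenspace_iff, Matrix.toLin'_apply,
      ← Units.val_pow_eq_pow_val, ← hBk, coe_scalar, scalar_mulVec]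
    exact ⟨rfl, by simp⟩
  rw [pow_mul', ← hBk, ← map_pow, show μ ^ 2 = 1 from Units.ext hμ, map_one]

end Matrix.GeneralLinearGroup

open Matrix.GeneralLinearGroup in
theorem conic_without_points_auto_order_two_general
    (K : Type*) [Field K]
    (hroots : ∀ n : ℕ, 0 < n → ∃ ζ : K, IsPrimitiveRoot ζ n)
    (q : QuadraticForm K (Fin 3 → K))
    (hsmooth : (QuadraticMap.polarBilin q).Nondegenerate)
    (hnopoints : q.Anisotropic)
    (A : GL (Fin 3) K)
    (hA : ∃ c : Kˣ, ∀ v : Fin 3 → K, q ((A : Matrix (Fin 3) (Fin 3) K).mulVec v) = (c : K) * q v)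
    (g : GL (Fin 3) K ⧸ Subgroup.center (GL (Fin 3) K))
    (hg : g = QuotientGroup.mk A)
    (hfin : 0 < orderOf g) (hnontriv : g ≠ 1) :
    orderOf g = 2 := by
  obtain ⟨c, hc⟩ := hA
  obtain ⟨B, hBA, hB⟩ := exists_isometry_mk_eq_of_odd_card (by decide) hsmooth hc
  have hgB : g = B := hg.trans hBA.symm
  have : NeZero (2 * orderOf g) := ⟨by omega⟩
  obtain ⟨ζ, hζ⟩ := hroots (2 * orderOf g) (by omega)
  have hB2k : (B : Matrix (Fin 3) (Fin 3) K) ^ (2 * orderOf g) = 1 := by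
    simpa [hgB] using congrArg Units.val (pow_two_mul_orderOf_mk_eq_one hnopoints hB)
  have hB2 : B ^ 2 = 1 :=
    Units.ext (by simpa using Matrix.sq_eq_one_of_isometry_of_pow_eq_one hnopoints hB hζ hB2k)
  exact orderOf_eq_prime (by rw [hgB, ← QuotientGroup.mk_pow, hB2, QuotientGroup.mk_one]) hnontriv

theorem conic_without_points_auto_order_two
    (K : Type*) [Field K] [CharZero K]
    (hroots : ∀ n : ℕ, 0 < n → ∃ ζ : K, IsPrimitiveRoot ζ n)
    (q : QuadraticForm K (Fin 3 → K))
    (hsmooth : (QuadraticMap.polarBilin q).Nondegenerate)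
    (hnopoints : q.Anisotropic)
    (A : GL (Fin 3) K)
    (hA : ∃ c : Kˣ, ∀ v : Fin 3 → K, q ((A : Matrix (Fin 3) (Fin 3) K).mulVec v) = (c : K) * q v)
    (g : GL (Fin 3) K ⧸ Subgroup.center (GL (Fin 3) K))
    (hg : g = QuotientGroup.mk A)
    (hfin : 0 < orderOf g) (hnontriv : g ≠ 1) :
    orderOf g = 2 :=
  conic_without_points_auto_order_two_general K hroots q hsmooth hnopoints A hA g hg hfin hnontriv
end

section
/- Every finite group in which every non-trivial element has order 2 and which embeds into PGL_2 over an algebraically closed field of characteristic zero is trivial, cyclic of order 2, or isomorphic to the Klein four-group Z/2Z × Z/2Z. -/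
open Matrix

section Helpers

variable {k : Type*} [Field k] [CharZero k]

/-- Scalar units are central in `GL (Fin 2) k`. -/
lemma scalar_mem_center_GL2 (u : GL (Fin 2) k) (c : k)
    (h : (u : Matrix (Fin 2) (Fin 2) k) = c • (1 : Matrix (Fin 2) (Fin 2) k)) :
    u ∈ Subgroup.center (GL (Fin 2) k) := by
  rw [Subgroup.mem_center_iff]
  intro v
  ext : 1
  simp only [Units.val_mul, h, Matrix.smul_mul, Matrix.mul_smul, Matrix.one_mul, Matrix.mul_one]

/-- A matrix commuting with the two elementary transvections is scalar. -/
lemma commutes_transvections_scalar (Z : Matrix (Fin 2) (Fin 2) k)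
    (hu : !![1,1;0,1] * Z = Z * !![1,1;0,1])
    (hv : !![1,0;1,1] * Z = Z * !![1,0;1,1]) :
    ∃ c : k, Z = c • (1 : Matrix (Fin 2) (Fin 2) k) := by
  rw [Matrix.eta_fin_two Z] at hu hv
  rw [Matrix.mul_fin_two, Matrix.mul_fin_two] at hu hv
  rw [← Matrix.ext_iff] at hu hv
  have h00 := hu 0 0
  have h01 := hu 0 1
  have h10 := hv 0 0
  simp at h00 h01 h10
  have h11 : Z 1 1 = Z 0 0 := by linear_combination h01
  refine ⟨Z 0 0, ?_⟩
  ext i j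
  fin_cases i <;> fin_cases j <;>
    simp [Matrix.smul_apply, Matrix.one_apply] <;>
    first
      | exact h10
      | exact h00
      | exact h11

/-- Central units in `GL (Fin 2) k` are scalar. -/
lemma center_GL2_is_scalar (u : GL (Fin 2) k)
    (h : u ∈ Subgroup.center (GL (Fin 2) k)) :
    ∃ c : k, (u : Matrix (Fin 2) (Fin 2) k) = c • (1 : Matrix (Fin 2) (Fin 2) k) := by
  rw [Subgroup.mem_center_iff] at h
  have hUdef : ∃ U : GL (Fin 2) k, (U : Matrix (Fin 2) (Fin 2) k) = !![1,1;0,1] := by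
    refine ⟨⟨!![1,1;0,1], !![1,-1;0,1], ?_, ?_⟩, rfl⟩ <;>
      · ext i j
        fin_cases i <;> fin_cases j <;>
          simp [Matrix.mul_apply, Fin.sum_univ_two, Matrix.one_apply]
  have hVdef : ∃ V : GL (Fin 2) k, (V : Matrix (Fin 2) (Fin 2) k) = !![1,0;1,1] := by
    refine ⟨⟨!![1,0;1,1], !![1,0;-1,1], ?_, ?_⟩, rfl⟩ <;>
      · ext i j
        fin_cases i <;> fin_cases j <;>
          simp [Matrix.mul_apply, Fin.sum_univ_two, Matrix.one_apply]
  obtain ⟨U, hU⟩ := hUdef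
  obtain ⟨V, hV⟩ := hVdef
  apply commutes_transvections_scalar
  · have := congrArg Units.val (h U)
    simpa [Units.val_mul, hU] using this
  · have := congrArg Units.val (h V)
    simpa [Units.val_mul, hV] using this

/-- A nonscalar 2×2 matrix whose square is scalar is traceless. -/
lemma traceless_of_sq_scalar (A : Matrix (Fin 2) (Fin 2) k) (α : k)
    (h : A * A = α • (1 : Matrix (Fin 2) (Fin 2) k))
    (hns : ∀ c : k, A ≠ c • (1 : Matrix (Fin 2) (Fin 2) k)) :
    A 0 0 + A 1 1 = 0 := by
  by_contra htr
  rw [Matrix.eta_fin_two A, Matrix.mul_fin_two] at h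
  rw [← Matrix.ext_iff] at h
  have h00 := h 0 0
  have h01 := h 0 1
  have h10 := h 1 0
  have h11 := h 1 1
  simp [Matrix.smul_apply, Matrix.one_apply] at h00 h01 h10 h11
  have h01' : A 0 1 * (A 0 0 + A 1 1) = 0 := by linear_combination h01
  have h10' : A 1 0 * (A 0 0 + A 1 1) = 0 := by linear_combination h10
  have hb : A 0 1 = 0 := by
    rcases mul_eq_zero.mp h01' with h' | h'
    · exact h'
    · exact absurd h' htr
  have hc : A 1 0 = 0 := by
    rcases mul_eq_zero.mp h10' with h' | h'
    · exact h'
    · exact absurd h' htr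
  have had : A 0 0 = A 1 1 := by
    have hprod : (A 0 0 - A 1 1) * (A 0 0 + A 1 1) = 0 := by
      linear_combination h00 - h11 + A 1 0 * hb - A 0 1 * hc
    rcases mul_eq_zero.mp hprod with h' | h'
    · linear_combination h'
    · exact absurd h' htr
  exact hns (A 0 0) (by
    ext i j
    fin_cases i <;> fin_cases j <;>
      simp [Matrix.smul_apply, Matrix.one_apply] <;>
      first
        | exact hb
        | exact hc
        | exact had.symm)

/-- For traceless 2×2 matrices, `A*B + B*A` is scalar. -/
lemma traceless_anticommutator (A B : Matrix (Fin 2) (Fin 2) k)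
    (hA : A 0 0 + A 1 1 = 0) (hB : B 0 0 + B 1 1 = 0) :
    A * B + B * A =
      (A 0 0 * B 0 0 + A 0 1 * B 1 0 + A 1 0 * B 0 1 + A 1 1 * B 1 1) •
        (1 : Matrix (Fin 2) (Fin 2) k) := by
  ext i j
  fin_cases i <;> fin_cases j <;>
    simp [Matrix.mul_apply, Fin.sum_univ_two, Matrix.one_apply]
  · linear_combination B 0 0 * hA - A 1 1 * hB
  · linear_combination B 0 1 * hA + A 0 1 * hB
  · linear_combination B 1 0 * hA + A 1 0 * hB
  · linear_combination A 1 1 * hB - B 0 0 * hA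

/-- A traceless matrix commuting with an invertible nonzero-determinant traceless
matrix is a scalar multiple of it. -/
lemma traceless_commute_is_smul (A B : Matrix (Fin 2) (Fin 2) k)
    (hA : A 0 0 + A 1 1 = 0) (hB : B 0 0 + B 1 1 = 0)
    (hdet : A.det ≠ 0) (hcomm : A * B = B * A) :
    ∃ c : k, B = c • A := by
  set s : k := A 0 0 * A 0 0 + A 0 1 * A 1 0 + A 1 0 * A 0 1 + A 1 1 * A 1 1 with hs
  have hAA : A * A + A * A = s • (1 : Matrix (Fin 2) (Fin 2) k) :=
    traceless_anticommutator A A hA hA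
  have hAA2 : (2 : k) • (A * A) = s • (1 : Matrix (Fin 2) (Fin 2) k) := by
    rw [two_smul]; exact hAA
  set t : k := A 0 0 * B 0 0 + A 0 1 * B 1 0 + A 1 0 * B 0 1 + A 1 1 * B 1 1 with ht
  have hAB : A * B + B * A = t • (1 : Matrix (Fin 2) (Fin 2) k) :=
    traceless_anticommutator A B hA hB
  have hAB2 : (2 : k) • (A * B) = t • (1 : Matrix (Fin 2) (Fin 2) k) := by
    rw [two_smul]; nth_rewrite 2 [hcomm]; exact hAB
  have hsne : s ≠ 0 := by
    intro h0
    have : (2 : k) • (A * A) = 0 := by rw [hAA2, h0, zero_smul]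
    have hsq : A * A = 0 := by
      have h2 : (2 : k) ≠ 0 := two_ne_zero
      rwa [smul_eq_zero, or_iff_right h2] at this
    have : A.det * A.det = 0 := by
      have := congrArg Matrix.det hsq
      simpa [Matrix.det_mul] using this
    exact hdet (by rcases mul_eq_zero.mp this with h | h <;> exact h)
  refine ⟨s⁻¹ * t, ?_⟩
  have key : s • B = t • A := by
    calc s • B = (s • (1 : Matrix (Fin 2) (Fin 2) k)) * B := by
          rw [Matrix.smul_mul, Matrix.one_mul]
      _ = ((2 : k) • (A * A)) * B := by rw [hAA2]
      _ = (2 : k) • (A * (A * B)) := by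
          rw [Matrix.smul_mul, Matrix.mul_assoc]
      _ = A * ((2 : k) • (A * B)) := by rw [Matrix.mul_smul]
      _ = A * (t • (1 : Matrix (Fin 2) (Fin 2) k)) := by rw [hAB2]
      _ = t • A := by rw [Matrix.mul_smul, Matrix.mul_one]
  calc B = s⁻¹ • (s • B) := by rw [smul_smul, inv_mul_cancel₀ hsne, one_smul]
    _ = s⁻¹ • (t • A) := by rw [key]
    _ = (s⁻¹ * t) • A := by rw [smul_smul]

end Helpers

/-!
STATEMENT 2.  Every finite group in which every non-trivial element has order 2 and which
embeds into `PGL₂(k) = GL₂(k) ⧸ center` over an algebraically closed field `k` of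
characteristic zero is trivial, cyclic of order 2, or the Klein four-group.
-/
theorem exponent_two_subgroup_of_PGL2
    (k : Type*) [Field k] [IsAlgClosed k] [CharZero k]
    (G : Type*) [Group G] [Finite G]
    (hexp : ∀ g : G, g * g = 1)
    (f : G →* (GL (Fin 2) k ⧸ Subgroup.center (GL (Fin 2) k)))
    (hf : Function.Injective f) :
    Subsingleton G ∨ Nonempty (G ≃* Multiplicative (ZMod 2)) ∨
      Nonempty (G ≃* (Multiplicative (ZMod 2) × Multiplicative (ZMod 2))) := by
  -- basic group facts
  have hinv : ∀ g : G, g⁻¹ = g := fun g => inv_eq_of_mul_eq_one_right (hexp g)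
  have hcomm : ∀ g h : G, g * h = h * g := fun g h => by
    have h1 : (g * h)⁻¹ = g * h := hinv _
    rw [_root_.mul_inv_rev, hinv, hinv] at h1
    exact h1.symm
  -- lifting
  have hlift : ∀ g : G, ∃ A : GL (Fin 2) k,
      (A : GL (Fin 2) k ⧸ Subgroup.center (GL (Fin 2) k)) = f g := fun g =>
    Quotient.exists_rep (f g)
  -- key facts about lifts of nontrivial elements
  have keyfact : ∀ (g : G) (A : GL (Fin 2) k),
      (A : GL (Fin 2) k ⧸ Subgroup.center (GL (Fin 2) k)) = f g → g ≠ 1 →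
      ((∀ c : k, (A : Matrix (Fin 2) (Fin 2) k) ≠ c • 1) ∧
        (A : Matrix (Fin 2) (Fin 2) k) 0 0 + (A : Matrix (Fin 2) (Fin 2) k) 1 1 = 0) := by
    intro g A hA hg
    have hns : ∀ c : k, (A : Matrix (Fin 2) (Fin 2) k) ≠ c • 1 := by
      intro c hc
      apply hg
      apply hf
      rw [← hA, _root_.map_one, QuotientGroup.eq_one_iff]
      exact scalar_mem_center_GL2 A c hc
    refine ⟨hns, ?_⟩
    have hsq : (A * A : GL (Fin 2) k) ∈ Subgroup.center (GL (Fin 2) k) := by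
      rw [← QuotientGroup.eq_one_iff, QuotientGroup.mk_mul, hA, ← _root_.map_mul, hexp, _root_.map_one]
    obtain ⟨α, hα⟩ := center_GL2_is_scalar _ hsq
    rw [Units.val_mul] at hα
    exact traceless_of_sq_scalar _ α hα hns
  -- commuting lifts force equality in G
  have pairlemma : ∀ (g h : G) (A B : GL (Fin 2) k),
      (A : GL (Fin 2) k ⧸ Subgroup.center (GL (Fin 2) k)) = f g →
      (B : GL (Fin 2) k ⧸ Subgroup.center (GL (Fin 2) k)) = f h →
      g ≠ 1 → h ≠ 1 →
      (A : Matrix (Fin 2) (Fin 2) k) * (B : Matrix (Fin 2) (Fin 2) k) =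
        (B : Matrix (Fin 2) (Fin 2) k) * (A : Matrix (Fin 2) (Fin 2) k) →
      g = h := by
    intro g h A B hA hB hg hh hABc
    obtain ⟨hAns, hAtr⟩ := keyfact g A hA hg
    obtain ⟨hBns, hBtr⟩ := keyfact h B hB hh
    have hdet : (A : Matrix (Fin 2) (Fin 2) k).det ≠ 0 := by
      have : IsUnit (A : Matrix (Fin 2) (Fin 2) k).det :=
        (Matrix.isUnit_iff_isUnit_det _).mp ⟨A, rfl⟩
      exact this.ne_zero
    obtain ⟨c, hc⟩ := traceless_commute_is_smul _ _ hAtr hBtr hdet hABc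
    have hcent : (B * A⁻¹ : GL (Fin 2) k) ∈ Subgroup.center (GL (Fin 2) k) := by
      apply scalar_mem_center_GL2 _ c
      have : ((B * A⁻¹ : GL (Fin 2) k) : Matrix (Fin 2) (Fin 2) k) =
          (B : Matrix (Fin 2) (Fin 2) k) * ((A⁻¹ : GL (Fin 2) k) : Matrix (Fin 2) (Fin 2) k) :=
        Units.val_mul _ _
      rw [this, hc, Matrix.smul_mul]
      have hone : (A : Matrix (Fin 2) (Fin 2) k) *
          ((A⁻¹ : GL (Fin 2) k) : Matrix (Fin 2) (Fin 2) k) = 1 := by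
        rw [← Units.val_mul, mul_inv_cancel, Units.val_one]
      rw [hone]
    have : QuotientGroup.mk (B * A⁻¹ : GL (Fin 2) k)
        = (1 : GL (Fin 2) k ⧸ Subgroup.center (GL (Fin 2) k)) :=
      (QuotientGroup.eq_one_iff _).mpr hcent
    rw [QuotientGroup.mk_mul, QuotientGroup.mk_inv, hA, hB] at this
    exact (hf (mul_inv_eq_one.mp this)).symm
  -- distinct nontrivial elements have anticommuting lifts
  have anticomm : ∀ (g h : G) (A B : GL (Fin 2) k),
      (A : GL (Fin 2) k ⧸ Subgroup.center (GL (Fin 2) k)) = f g →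
      (B : GL (Fin 2) k ⧸ Subgroup.center (GL (Fin 2) k)) = f h →
      g ≠ 1 → h ≠ 1 → g ≠ h →
      (B : Matrix (Fin 2) (Fin 2) k) * (A : Matrix (Fin 2) (Fin 2) k) =
        -((A : Matrix (Fin 2) (Fin 2) k) * (B : Matrix (Fin 2) (Fin 2) k)) := by
    intro g h A B hA hB hg hh hgh
    have hq : ((A * B : GL (Fin 2) k) : GL (Fin 2) k ⧸ Subgroup.center (GL (Fin 2) k))
        = ((B * A : GL (Fin 2) k) : GL (Fin 2) k ⧸ Subgroup.center (GL (Fin 2) k)) := by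
      rw [QuotientGroup.mk_mul, QuotientGroup.mk_mul, hA, hB, ← _root_.map_mul, ← _root_.map_mul,
        hcomm g h]
    have hmem : ((A * B)⁻¹ * (B * A) : GL (Fin 2) k) ∈ Subgroup.center (GL (Fin 2) k) := by
      rw [← QuotientGroup.eq_one_iff, QuotientGroup.mk_mul, QuotientGroup.mk_inv, hq]
      group
    obtain ⟨ε, hε⟩ := center_GL2_is_scalar _ hmem
    have hBA : ((B * A : GL (Fin 2) k) : Matrix (Fin 2) (Fin 2) k) =
        ε • ((A * B : GL (Fin 2) k) : Matrix (Fin 2) (Fin 2) k) := by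
      have : (B * A : GL (Fin 2) k) = (A * B) * ((A * B)⁻¹ * (B * A)) := by group
      rw [this, Units.val_mul, hε, Matrix.mul_smul, Matrix.mul_one]
    have hdetAB : ((A * B : GL (Fin 2) k) : Matrix (Fin 2) (Fin 2) k).det ≠ 0 := by
      have : IsUnit ((A * B : GL (Fin 2) k) : Matrix (Fin 2) (Fin 2) k).det :=
        (Matrix.isUnit_iff_isUnit_det _).mp ⟨A * B, rfl⟩
      exact this.ne_zero
    have hε2 : ε * ε = 1 := by
      have hd := congrArg Matrix.det hBA
      rw [Matrix.det_smul] at hd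
      have hdd : ((B * A : GL (Fin 2) k) : Matrix (Fin 2) (Fin 2) k).det =
          ((A * B : GL (Fin 2) k) : Matrix (Fin 2) (Fin 2) k).det := by
        simp only [Units.val_mul, Matrix.det_mul]
        ring
      rw [hdd] at hd
      have : (ε ^ Fintype.card (Fin 2) - 1) *
          ((A * B : GL (Fin 2) k) : Matrix (Fin 2) (Fin 2) k).det = 0 := by
        rw [sub_mul, one_mul, ← hd]; ring
      rcases mul_eq_zero.mp this with h' | h'
      · have : ε ^ 2 = 1 := by simpa using sub_eq_zero.mp h'
        rwa [sq] at this
      · exact absurd h' hdetAB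
    rcases mul_self_eq_one_iff.mp hε2 with h1 | hm1
    · exfalso
      apply hgh
      apply pairlemma g h A B hA hB hg hh
      have := hBA
      rw [h1, one_smul, Units.val_mul, Units.val_mul] at this
      exact this.symm
    · have := hBA
      rw [hm1, Units.val_mul, Units.val_mul, neg_smul, one_smul] at this
      exact this
  -- the size bound: no element outside {1, a, b, a*b}
  have bound : ∀ a b c : G, a ≠ 1 → b ≠ 1 → c ≠ 1 → a ≠ b → a ≠ c → b ≠ c →
      c = a * b := by
    intro a b c ha hb hc hab hac hbc
    by_contra hcab
    obtain ⟨A, hA⟩ := hlift a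
    obtain ⟨B, hB⟩ := hlift b
    obtain ⟨C, hC⟩ := hlift c
    have hABl : ((A * B : GL (Fin 2) k) :
        GL (Fin 2) k ⧸ Subgroup.center (GL (Fin 2) k)) = f (a * b) := by
      rw [QuotientGroup.mk_mul, hA, hB, _root_.map_mul]
    have habne : a * b ≠ 1 := by
      intro h'
      exact hab (by rw [← hinv b]; exact eq_inv_of_mul_eq_one_left h')
    have h2 := anticomm a c A C hA hC ha hc hac
    have h3 := anticomm b c B C hB hC hb hc hbc
    set A' := (A : Matrix (Fin 2) (Fin 2) k) with hA'
    set B' := (B : Matrix (Fin 2) (Fin 2) k) with hB'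
    set C' := (C : Matrix (Fin 2) (Fin 2) k) with hC'
    have hcommAB : (A' * B') * C' = C' * (A' * B') := by
      calc (A' * B') * C' = A' * (B' * C') := by rw [mul_assoc]
        _ = A' * (-(C' * B')) := by rw [h3, neg_neg]
        _ = -(A' * C') * B' := by rw [mul_neg, neg_mul, mul_assoc]
        _ = (C' * A') * B' := by rw [h2]
        _ = C' * (A' * B') := by rw [mul_assoc]
    have := pairlemma (a * b) c (A * B) C hABl hC habne hc
      (by rw [Units.val_mul]; exact hcommAB)
    exact hcab this.symm
  -- classification
  rcases subsingleton_or_nontrivial G with hsub | hnt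
  · exact Or.inl hsub
  obtain ⟨a, ha⟩ := exists_ne (1 : G)
  by_cases hbex : ∃ b : G, b ≠ 1 ∧ b ≠ a
  · -- Klein four case
    obtain ⟨b, hb1, hba⟩ := hbex
    have hclass : ∀ c : G, c = 1 ∨ c = a ∨ c = b ∨ c = a * b := by
      intro c
      by_cases hc1 : c = 1; · exact Or.inl hc1
      by_cases hca : c = a; · exact Or.inr (Or.inl hca)
      by_cases hcb : c = b; · exact Or.inr (Or.inr (Or.inl hcb))
      exact Or.inr (Or.inr (Or.inr
        (bound a b c ha hb1 hc1 (Ne.symm hba) (fun h => hca h.symm) (fun h => hcb h.symm))))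
    have habne : a * b ≠ 1 := by
      intro h'
      exact (Ne.symm hba) (by rw [← hinv b]; exact eq_inv_of_mul_eq_one_left h')
    have haab : a ≠ a * b := by
      intro h'
      exact hb1 ((mul_left_cancel (a := a) (by rwa [mul_one])).symm)
    have hbab : b ≠ a * b := by
      intro h'
      exact ha ((mul_right_cancel (b := b) (by rwa [one_mul])).symm)
    have huniv : (Set.univ : Set G) = {1, a, b, a * b} := by
      ext x
      simp only [Set.mem_univ, true_iff, Set.mem_insert_iff, Set.mem_singleton_iff]
      exact hclass x
    have hcard4 : Nat.card G = 4 := by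
      rw [← Set.ncard_univ, huniv]
      rw [Set.ncard_insert_of_notMem (by
        simp only [Set.mem_insert_iff, Set.mem_singleton_iff]
        push_neg
        exact ⟨Ne.symm ha, Ne.symm hb1, Ne.symm habne⟩)]
      rw [Set.ncard_insert_of_notMem (by
        simp only [Set.mem_insert_iff, Set.mem_singleton_iff]
        push_neg
        exact ⟨Ne.symm hba, haab⟩)]
      rw [Set.ncard_insert_of_notMem (by
        simp only [Set.mem_singleton_iff]
        exact hbab)]
      rw [Set.ncard_singleton]
    have hexp2 : Monoid.exponent G = 2 := by
      have hdvd : Monoid.exponent G ∣ 2 :=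
        Monoid.exponent_dvd_of_forall_pow_eq_one fun g => by rw [pow_two]; exact hexp g
      have hne1 : Monoid.exponent G ≠ 1 := fun h1 => by
        obtain ⟨x, hx⟩ := exists_ne (1 : G)
        refine hx ?_
        have := Monoid.pow_exponent_eq_one x
        rwa [h1, pow_one] at this
      rcases (Nat.dvd_prime Nat.prime_two).mp hdvd with h | h
      · exact absurd h hne1
      · exact h
    haveI : IsKleinFour G := { card_four := hcard4, exponent_two := hexp2 }
    haveI : IsKleinFour (Multiplicative (ZMod 2) × Multiplicative (ZMod 2)) := by
      constructor
      · simp [Nat.card_eq_fintype_card]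
      · have hdvd : Monoid.exponent
            (Multiplicative (ZMod 2) × Multiplicative (ZMod 2)) ∣ 2 :=
          Monoid.exponent_dvd_of_forall_pow_eq_one (by decide)
        have hne1 : Monoid.exponent
            (Multiplicative (ZMod 2) × Multiplicative (ZMod 2)) ≠ 1 := fun h1 => by
          obtain ⟨x, hx⟩ :=
            exists_ne (1 : Multiplicative (ZMod 2) × Multiplicative (ZMod 2))
          refine hx ?_
          have := Monoid.pow_exponent_eq_one x
          rwa [h1, pow_one] at this
        rcases (Nat.dvd_prime Nat.prime_two).mp hdvd with h | h
        · exact absurd h hne1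
        · exact h
    exact Or.inr (Or.inr IsKleinFour.nonempty_mulEquiv)
  · -- order two case
    push_neg at hbex
    have hcard2 : Nat.card G = 2 := by
      rw [Nat.card_eq_two_iff]
      refine ⟨1, a, Ne.symm ha, ?_⟩
      ext x
      simp only [Set.mem_insert_iff, Set.mem_singleton_iff, Set.mem_univ, iff_true]
      by_cases h : x = 1
      · exact Or.inl h
      · exact Or.inr (hbex x h)
    have hcard2' : Nat.card (Multiplicative (ZMod 2)) = 2 := by
      simp [Nat.card_eq_fintype_card]
    exact Or.inr (Or.inl ⟨mulEquivOfPrimeCardEq hcard2 hcard2'⟩)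
end

section
/- Let 1 → Γ' → Γ → Γ'' be an exact sequence of groups (i.e., Γ' is a normal subgroup of Γ with an injective homomorphism Γ/Γ' → Γ''). If Γ' has bounded finite subgroups and Γ'' is strongly Jordan, then Γ is strongly Jordan. -/
/-- A group has bounded finite subgroups if the orders of its finite subgroups are
uniformly bounded. -/
def HasBoundedFiniteSubgroups (Γ : Type*) [Group Γ] : Prop :=
  ∃ B : ℕ, ∀ H : Subgroup Γ, Finite H → Nat.card H ≤ B

/-- A group is Jordan if there is a constant `J` such that every finite subgroup contains
a normal abelian subgroup of index at most `J`. -/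
def IsJordanGroup (Γ : Type*) [Group Γ] : Prop :=
  ∃ J : ℕ, ∀ G : Subgroup Γ, Finite G →
    ∃ A : Subgroup G, A.Normal ∧ IsMulCommutative A ∧ A.index ≤ J

/-- A group is strongly Jordan if it is Jordan and there is a constant `R` such that every
finite subgroup is generated by at most `R` elements. -/
def IsStronglyJordan (Γ : Type*) [Group Γ] : Prop :=
  IsJordanGroup Γ ∧ ∃ R : ℕ, ∀ G : Subgroup Γ, Finite G →
    ∃ S : Set G, S.Finite ∧ Nat.card S ≤ R ∧ Subgroup.closure S = ⊤

/-!
Let `B`, `J`, `R` bound the finite subgroups of `Γ'`, the Jordan indices and the numbers of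
generators in `Γ''`. For a finite `H ≤ Γ`, the kernel of `g` on `H` embeds in `Γ'`, so it has
order at most `B`. Lifting at most `R` generators of `g(H)` and adding the kernel generates `H`. For the Jordan
property, let `A ≤ H` be the preimage of an abelian subgroup of `g(H)` of index at most `J`.
Every commutator of `A` lies in the kernel, so `A` has at most `B` commutators and rank at most
`R + B`, hence its centre has index at most `B ^ (R + B)` in `A`. The normal core of that
centre is a normal abelian subgroup of `H` of index at most `(J * B ^ (R + B))!`.
-/

open Subgroup Group
open scoped Nat

section

variable {G Q : Type*} [Group G] [Group Q]

instance MonoidHom.finite_range [Finite G] (f : G →* Q) : Finite f.range :=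
  Finite.of_surjective _ f.rangeRestrict_surjective

lemma closure_union_ker_eq_top {f : G →* Q} {s : Set G} (hs : closure (f '' s) = ⊤) :
    closure (s ∪ f.ker) = ⊤ := by
  have hmap : (closure (s ∪ f.ker)).map f = ⊤ := by
    rw [eq_top_iff, ← hs, ← MonoidHom.map_closure]
    exact map_mono (closure_mono Set.subset_union_left)
  have hker : f.ker ≤ closure (s ∪ f.ker) := subset_closure.trans' Set.subset_union_right
  rw [← comap_map_eq_self hker, hmap, comap_top]

lemma Group.rank_le_ncard [FG G] {s : Set G} (hs : s.Finite) (hgen : closure s = ⊤) :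
    rank G ≤ s.ncard := by
  have := hs.to_subtype
  calc rank G = rank (closure s) :=
        Group.rank_congr (topEquiv.symm.trans (MulEquiv.subgroupCongr hgen.symm))
    _ ≤ s.ncard := (rank_closure_finite_le_nat_card s).trans_eq (Nat.card_coe_set_eq s)

lemma Group.exists_closure_eq_top_ncard_eq_rank [FG G] :
    ∃ s : Set G, s.Finite ∧ s.ncard = rank G ∧ closure s = ⊤ := by
  obtain ⟨s, hcard, hgen⟩ := rank_spec G
  exact ⟨s, s.finite_toSet, by rw [Set.ncard_coe_finset, hcard], hgen⟩

lemma Group.rank_le_rank_range_add_card_ker [Finite G] (f : G →* Q) :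
    rank G ≤ rank f.range + Nat.card f.ker := by
  obtain ⟨s, hs, hcard, hgen⟩ := exists_closure_eq_top_ncard_eq_rank (G := f.range)
  have hsurj := f.rangeRestrict_surjective
  set t := Function.surjInv hsurj '' s
  have himage : f.rangeRestrict '' t = s := by
    rw [← Set.image_comp, Function.comp_surjInv, Set.image_id]
  have htgen : closure (t ∪ f.ker) = ⊤ := by
    rw [← f.ker_rangeRestrict]
    exact closure_union_ker_eq_top (himage ▸ hgen)
  calc rank G ≤ (t ∪ f.ker).ncard := rank_le_ncard ((hs.image _).union (Set.toFinite _)) htgen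
    _ ≤ t.ncard + (f.ker : Set G).ncard := Set.ncard_union_le _ _
    _ ≤ rank f.range + Nat.card f.ker := by
      rw [← hcard, ← Nat.card_coe_set_eq (f.ker : Set G)]
      exact Nat.add_le_add_right (Set.ncard_image_le hs) _

lemma card_commutatorSet_le_card_ker [Finite G] (f : G →* Q)
    (hf : ∀ x y, Commute (f x) (f y)) : Nat.card (commutatorSet G) ≤ Nat.card f.ker := by
  refine Nat.card_mono (Set.toFinite _) ?_
  rintro _ ⟨x, y, rfl⟩
  simp [MonoidHom.mem_ker, commutatorElement_def, (hf x y).eq]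

lemma card_ker_comp_le {K : Type*} [Group K] (f : G →* Q) {i : K →* G}
    (hi : Function.Injective i) [Finite f.ker] : Nat.card (f.comp i).ker ≤ Nat.card f.ker :=
  Nat.card_le_card_of_injective (fun k ↦ ⟨i k, k.2⟩)
    fun _ _ h ↦ Subtype.ext (hi (congrArg Subtype.val h))

lemma index_normalCore_le_factorial (H : Subgroup G) [H.FiniteIndex] :
    H.normalCore.index ≤ H.index ! := by
  have : Finite (G ⧸ H) := finite_quotient_of_finiteIndex
  refine Nat.le_of_dvd (Nat.factorial_pos _) ?_
  rw [normalCore_eq_ker, index_ker, index_eq_card, ← Nat.card_perm]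
  exact card_subgroup_dvd_card _

lemma exists_normal_isMulCommutative_index_le_factorial (A : Subgroup G) [IsMulCommutative A]
    [A.FiniteIndex] :
    ∃ N : Subgroup G, N.Normal ∧ IsMulCommutative N ∧ N.index ≤ A.index ! := by
  have hle := A.normalCore_le
  refine ⟨A.normalCore, inferInstance, ?_, index_normalCore_le_factorial A⟩
  exact le_centralizer_iff_isMulCommutative.mp
    (hle.trans ((le_centralizer A).trans (centralizer_le hle)))

lemma exists_isMulCommutative_index_le [Finite G] (f : G →* Q) {B R : ℕ}
    (hker : Nat.card f.ker ≤ B) (hR : ∀ H : Subgroup Q, [Finite H] → rank H ≤ R)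
    (A : Subgroup f.range) [IsMulCommutative A] :
    ∃ W : Subgroup G, IsMulCommutative W ∧ W.index ≤ A.index * B ^ (R + B) := by
  set A' := A.comap f.rangeRestrict
  set ψ := f.comp A'.subtype
  have hψ : ∀ x y, Commute (ψ x) (ψ y) := fun x y ↦
    congrArg (fun z : A ↦ ((z : f.range) : Q)) (mul_comm' (⟨_, x.2⟩ : A) ⟨_, y.2⟩)
  have hψker : Nat.card ψ.ker ≤ B := (card_ker_comp_le f A'.subtype_injective).trans hker
  have hB : 1 ≤ B := Nat.card_pos.trans_le hker
  have hcenter : (center A').index ≤ B ^ (R + B) :=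
    calc (center A').index ≤ Nat.card (commutatorSet A') ^ rank A' := index_center_le_pow A'
      _ ≤ B ^ rank A' :=
          Nat.pow_le_pow_left ((card_commutatorSet_le_card_ker ψ hψ).trans hψker) _
      _ ≤ B ^ (R + B) := Nat.pow_le_pow_right hB
          ((rank_le_rank_range_add_card_ker ψ).trans (Nat.add_le_add (hR _) hψker))
  refine ⟨(center A').map A'.subtype, inferInstance, ?_⟩
  rw [index_map_subtype, index_comap_of_surjective _ f.rangeRestrict_surjective, mul_comm]
  exact Nat.mul_le_mul_left _ hcenter

end

lemma card_ker_comp_subtype_le_card_comap {G' G Q : Type*} [Group G'] [Group G] [Group Q]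
    {f : G' →* G} {g : G →* Q} (hexact : g.ker = f.range) (H : Subgroup G)
    [Finite (H.comap f)] : Nat.card (g.comp H.subtype).ker ≤ Nat.card (H.comap f) := by
  refine Nat.card_le_card_of_surjective (fun y ↦ ⟨⟨f y, y.2⟩, ?_⟩) ?_
  · show f y ∈ g.ker
    exact hexact ▸ ⟨y, rfl⟩
  · rintro ⟨⟨x, hxH⟩, hx⟩
    obtain ⟨y, rfl⟩ : x ∈ f.range := hexact ▸ hx
    exact ⟨⟨y, hxH⟩, rfl⟩

lemma isStronglyJordan_iff_rank {Γ : Type*} [Group Γ] : IsStronglyJordan Γ ↔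
    IsJordanGroup Γ ∧ ∃ R : ℕ, ∀ H : Subgroup Γ, [Finite H] → rank H ≤ R := by
  refine and_congr_right fun _ ↦ exists_congr fun R ↦ forall_congr' fun H ↦
    ⟨fun h _ ↦ ?_, fun h _ ↦ ?_⟩
  · obtain ⟨s, hs, hcard, hgen⟩ := h inferInstance
    exact (rank_le_ncard hs hgen).trans ((Nat.card_coe_set_eq s).symm.trans_le hcard)
  · obtain ⟨s, hs, hcard, hgen⟩ := exists_closure_eq_top_ncard_eq_rank (G := H)
    exact ⟨s, hs, (Nat.card_coe_set_eq s).trans_le (hcard.trans_le h), hgen⟩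

theorem stronglyJordan_of_extension_general
    (Γ' Γ Γ'' : Type*) [Group Γ'] [Group Γ] [Group Γ'']
    (f : Γ' →* Γ) (hf : Function.Injective f)
    (g : Γ →* Γ'') (hexact : g.ker = f.range)
    (hΓ' : HasBoundedFiniteSubgroups Γ')
    (hΓ'' : IsStronglyJordan Γ'') :
    IsStronglyJordan Γ := by
  obtain ⟨B, hB⟩ := hΓ'
  obtain ⟨⟨J, hJ⟩, R, hR⟩ := isStronglyJordan_iff_rank.mp hΓ''
  have hker (H : Subgroup Γ) [Finite H] : Nat.card (g.comp H.subtype).ker ≤ B := by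
    have : Finite (H.comap f) := Finite.of_injective (fun y ↦ (⟨f y, y.2⟩ : H))
      fun _ _ h ↦ Subtype.ext (hf (congrArg Subtype.val h))
    exact (card_ker_comp_subtype_le_card_comap hexact H).trans (hB _ inferInstance)
  refine isStronglyJordan_iff_rank.mpr
    ⟨⟨(J * B ^ (R + B))!, fun H _ ↦ ?_⟩, R + B, fun H _ ↦ ?_⟩
  · obtain ⟨A, -, _, hAJ⟩ := hJ (g.comp H.subtype).range inferInstance
    obtain ⟨W, _, hW⟩ := exists_isMulCommutative_index_le _ (hker H) hR A
    obtain ⟨N, hN, hNcomm, hNW⟩ := exists_normal_isMulCommutative_index_le_factorial W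
    exact ⟨N, hN, hNcomm, hNW.trans (Nat.factorial_le (hW.trans (Nat.mul_le_mul_right _ hAJ)))⟩
  · exact (rank_le_rank_range_add_card_ker _).trans (Nat.add_le_add (hR _) (hker H))

theorem stronglyJordan_of_extension
    (Γ' Γ Γ'' : Type*) [Group Γ'] [Group Γ] [Group Γ'']
    (f : Γ' →* Γ) (hf : Function.Injective f) (hnorm : f.range.Normal)
    (g : Γ →* Γ'') (hexact : g.ker = f.range)
    (hΓ' : HasBoundedFiniteSubgroups Γ')
    (hΓ'' : IsStronglyJordan Γ'') :
    IsStronglyJordan Γ :=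
  stronglyJordan_of_extension_general Γ' Γ Γ'' f hf g hexact hΓ' hΓ''
end

section
/- Let k be an algebraically closed field of characteristic zero. Every finite subgroup of PGL_2(k) in which all non-trivial elements have order 2 has order at most 4. -/
section Aux

variable {k : Type*} [Field k]

/-- A non-scalar matrix squaring to a scalar has trace zero. -/
private lemma aux_trace_zero (M : Matrix (Fin 2) (Fin 2) k) (r : k) (h : M * M = r • 1)
    (hns : ∀ s : k, M ≠ s • 1) : M 0 0 + M 1 1 = 0 := by
  by_contra hne
  set a := M 0 0; set b := M 0 1; set c := M 1 0; set d := M 1 1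
  have hM : M = !![a, b; c, d] := Matrix.eta_fin_two M
  rw [hM, Matrix.mul_fin_two] at h
  have h01 : a * b + b * d = 0 := by
    have := congrFun (congrFun h 0) 1; simpa using this
  have h10 : c * a + d * c = 0 := by
    have := congrFun (congrFun h 1) 0; simpa using this
  have h00 : a * a + b * c = r := by
    have := congrFun (congrFun h 0) 0; simpa using this
  have h11 : c * b + d * d = r := by
    have := congrFun (congrFun h 1) 1; simpa using this
  have hb : b = 0 := by
    have : b * (a + d) = 0 := by ring_nf; linear_combination h01
    rcases mul_eq_zero.1 this with h | h
    · exact h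
    · exact absurd h hne
  have hc : c = 0 := by
    have : c * (a + d) = 0 := by linear_combination h10
    rcases mul_eq_zero.1 this with h | h
    · exact h
    · exact absurd h hne
  have had : a = d := by
    have h2 : (a - d) * (a + d) = 0 := by
      linear_combination h00 - h11
    rcases mul_eq_zero.1 h2 with h | h
    · linear_combination h
    · exact absurd h hne
  exact hns a (by rw [hM, hb, hc, ← had]; ext i j; fin_cases i <;> fin_cases j <;>
    simp [Matrix.one_apply])

/-- Two commuting trace-zero 2×2 matrices in characteristic zero have scalar product. -/
private lemma aux_comm_scalar [CharZero k] (A B : Matrix (Fin 2) (Fin 2) k)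
    (hA : A 0 0 + A 1 1 = 0) (hB : B 0 0 + B 1 1 = 0) (hcomm : A * B = B * A) :
    ∃ s : k, A * B = s • 1 := by
  set a := A 0 0; set b := A 0 1; set c := A 1 0
  set e := B 0 0; set f := B 0 1; set g := B 1 0
  have hA1 : A 1 1 = -a := by linear_combination hA
  have hB1 : B 1 1 = -e := by linear_combination hB
  have hAe : A = !![a, b; c, -a] := by rw [Matrix.eta_fin_two A, hA1]
  have hBe : B = !![e, f; g, -e] := by rw [Matrix.eta_fin_two B, hB1]
  rw [hAe, hBe, Matrix.mul_fin_two] at hcomm ⊢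
  have h01 : a * f + b * -e = e * b + f * -a := by
    have := congrFun (congrFun hcomm 0) 1; simpa using this
  have h10 : c * e + -a * g = g * a + -e * c := by
    have := congrFun (congrFun hcomm 1) 0; simpa using this
  have h00 : a * e + b * g = e * a + f * c := by
    have := congrFun (congrFun hcomm 0) 0; simpa using this
  refine ⟨a * e + b * g, ?_⟩
  have haf : a * f = b * e := by linear_combination h01 / 2
  have hce : c * e = a * g := by linear_combination h10 / 2
  ext i j
  fin_cases i <;> fin_cases j
  · simp
  · simp only [Matrix.cons_val', Matrix.cons_val_zero, Matrix.cons_val_one, Matrix.head_cons,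
      Matrix.head_fin_const, Matrix.empty_val', Matrix.cons_val_fin_one, Matrix.smul_apply,
      Matrix.one_apply, smul_eq_mul]
    norm_num
    linear_combination haf
  · simp only [Matrix.cons_val', Matrix.cons_val_zero, Matrix.cons_val_one, Matrix.head_cons,
      Matrix.head_fin_const, Matrix.empty_val', Matrix.cons_val_fin_one, Matrix.smul_apply,
      Matrix.one_apply, smul_eq_mul]
    norm_num
    linear_combination hce
  · simp only [Matrix.cons_val', Matrix.cons_val_zero, Matrix.cons_val_one, Matrix.head_cons,
      Matrix.head_fin_const, Matrix.empty_val', Matrix.cons_val_fin_one, Matrix.smul_apply,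
      Matrix.one_apply, smul_eq_mul]
    norm_num
    linear_combination -h00

/-- A scalar element of `GL₂` is central. -/
private lemma aux_scalar_center (M : GL (Fin 2) k) (r : k)
    (h : (M : Matrix (Fin 2) (Fin 2) k) = r • 1) :
    M ∈ Subgroup.center (GL (Fin 2) k) := by
  rw [Subgroup.mem_center_iff]
  intro g
  ext
  simp only [Units.val_mul, h, Matrix.mul_smul, Matrix.smul_mul, Matrix.mul_one, Matrix.one_mul]

/-- A central element of `GL₂` is scalar. -/
private lemma aux_center_scalar (M : GL (Fin 2) k) (h : M ∈ Subgroup.center (GL (Fin 2) k)) :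
    ∃ r : k, (M : Matrix (Fin 2) (Fin 2) k) = r • 1 := by
  rw [Subgroup.mem_center_iff] at h
  set a := (M : Matrix (Fin 2) (Fin 2) k) 0 0
  set b := (M : Matrix (Fin 2) (Fin 2) k) 0 1
  set c := (M : Matrix (Fin 2) (Fin 2) k) 1 0
  set d := (M : Matrix (Fin 2) (Fin 2) k) 1 1
  have hMe : (M : Matrix (Fin 2) (Fin 2) k) = !![a, b; c, d] := Matrix.eta_fin_two _
  have hU : (!![1, 1; 0, 1] : Matrix (Fin 2) (Fin 2) k) * !![1, -1; 0, 1] = 1 := by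
    rw [Matrix.mul_fin_two, Matrix.one_fin_two]; norm_num
  have hU' : (!![1, -1; 0, 1] : Matrix (Fin 2) (Fin 2) k) * !![1, 1; 0, 1] = 1 := by
    rw [Matrix.mul_fin_two, Matrix.one_fin_two]; norm_num
  have hL : (!![1, 0; 1, 1] : Matrix (Fin 2) (Fin 2) k) * !![1, 0; -1, 1] = 1 := by
    rw [Matrix.mul_fin_two, Matrix.one_fin_two]; norm_num
  have hL' : (!![1, 0; -1, 1] : Matrix (Fin 2) (Fin 2) k) * !![1, 0; 1, 1] = 1 := by
    rw [Matrix.mul_fin_two, Matrix.one_fin_two]; norm_num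
  have h1 := congrArg Units.val (h ⟨!![1, 1; 0, 1], !![1, -1; 0, 1], hU, hU'⟩)
  have h2 := congrArg Units.val (h ⟨!![1, 0; 1, 1], !![1, 0; -1, 1], hL, hL'⟩)
  simp only [Units.val_mul] at h1 h2
  rw [hMe, Matrix.mul_fin_two, Matrix.mul_fin_two] at h1 h2
  have e1 : (1:k) * a + 1 * c = a * 1 + b * 0 := by
    have := congrFun (congrFun h1 0) 0; simpa using this
  have e2 : (1:k) * b + 1 * d = a * 1 + b * 1 := by
    have := congrFun (congrFun h1 0) 1; simpa using this
  have e3 : (1:k) * a + 0 * c = a * 1 + b * 1 := by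
    have := congrFun (congrFun h2 0) 0; simpa using this
  refine ⟨a, ?_⟩
  have hc : c = 0 := by linear_combination e1
  have hb : b = 0 := by linear_combination -e3
  have hd : d = a := by linear_combination e2
  rw [hMe, hb, hc, hd]
  ext i j
  fin_cases i <;> fin_cases j <;> simp [Matrix.one_apply]

end Aux

/-!
STATEMENT 10.  Let `k` be an algebraically closed field of characteristic zero.  Every
finite subgroup of `PGL₂(k) = GL₂(k) ⧸ center` all of whose non-trivial elements have
order 2 has order at most 4.
-/
theorem PGL2_elementary_two_subgroup_card_le_four
    (k : Type*) [Field k] [IsAlgClosed k] [CharZero k]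
    (G : Subgroup (GL (Fin 2) k ⧸ Subgroup.center (GL (Fin 2) k)))
    (hfin : Finite G) (hexp : ∀ g ∈ G, g * g = 1) :
    Nat.card G ≤ 4 := by
  by_contra hcard
  push_neg at hcard
  classical
  letI : Fintype G := Fintype.ofFinite G
  rw [Nat.card_eq_fintype_card] at hcard
  set Q := GL (Fin 2) k ⧸ Subgroup.center (GL (Fin 2) k)
  -- the subgroup is abelian
  have hcomm : ∀ g ∈ G, ∀ h ∈ G, g * h = h * g := by
    intro g hg h hh
    have hgh := hexp _ (mul_mem hg hh)
    have hg2 := hexp g hg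
    have hh2 := hexp h hh
    have h1 : (g * h)⁻¹ = g * h := inv_eq_of_mul_eq_one_right hgh
    have h2 : g⁻¹ = g := inv_eq_of_mul_eq_one_right hg2
    have h3 : h⁻¹ = h := inv_eq_of_mul_eq_one_right hh2
    calc g * h = (g * h)⁻¹ := h1.symm
      _ = h⁻¹ * g⁻¹ := mul_inv_rev g h
      _ = h * g := by rw [h2, h3]
  -- find three suitable elements of G
  obtain ⟨a, ha1⟩ := Fintype.exists_ne_of_one_lt_card (by omega) (1 : G)
  have hb : ∃ b : G, b ∉ ({1, a} : Finset G) := by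
    by_contra hcon
    push_neg at hcon
    have : (Finset.univ : Finset G) ⊆ {1, a} := fun x _ => hcon x
    have := Finset.card_le_card this
    have h2 : ({1, a} : Finset G).card ≤ 2 := Finset.card_insert_le _ _ |>.trans (by simp)
    simp only [Finset.card_univ] at this
    omega
  obtain ⟨b, hbmem⟩ := hb
  simp only [Finset.mem_insert, Finset.mem_singleton] at hbmem
  push_neg at hbmem
  obtain ⟨hb1, hba⟩ := hbmem
  have hc : ∃ c : G, c ∉ ({1, a, b, a * b} : Finset G) := by
    by_contra hcon
    push_neg at hcon
    have : (Finset.univ : Finset G) ⊆ {1, a, b, a * b} := fun x _ => hcon x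
    have := Finset.card_le_card this
    have h2 : ({1, a, b, a * b} : Finset G).card ≤ 4 := by
      refine (Finset.card_insert_le _ _).trans (Nat.succ_le_succ ?_)
      refine (Finset.card_insert_le _ _).trans (Nat.succ_le_succ ?_)
      refine (Finset.card_insert_le _ _).trans (Nat.succ_le_succ ?_)
      simp
    simp only [Finset.card_univ] at this
    omega
  obtain ⟨c, hcmem⟩ := hc
  simp only [Finset.mem_insert, Finset.mem_singleton] at hcmem
  push_neg at hcmem
  obtain ⟨hc1, hca, hcb, hcab⟩ := hcmem
  -- move to the quotient group
  set x : Q := (a : Q)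
  set y : Q := (b : Q)
  set z : Q := (c : Q)
  have hx2 : x * x = 1 := hexp _ a.2
  have hy2 : y * y = 1 := hexp _ b.2
  have hz2 : z * z = 1 := hexp _ c.2
  have hcoe_ne : ∀ u v : G, u ≠ v → (u : Q) ≠ (v : Q) := fun u v h hh =>
    h (Subtype.coe_injective hh)
  have hx1 : x ≠ 1 := by
    intro h
    have h' : ((a : G) : Q) = 1 := h
    exact ha1 (by simpa using h')
  have hy1 : y ≠ 1 := by
    intro h
    have h' : ((b : G) : Q) = 1 := h
    exact hb1 (by simpa using h')
  have hz1 : z ≠ 1 := by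
    intro h
    have h' : ((c : G) : Q) = 1 := h
    exact hc1 (by simpa using h')
  have hxy : x ≠ y := hcoe_ne a b (fun h => hba h.symm)
  have hzx : z ≠ x := hcoe_ne c a hca
  have hzy : z ≠ y := hcoe_ne c b hcb
  -- lifts
  obtain ⟨A, hA⟩ := QuotientGroup.mk_surjective x
  obtain ⟨B, hB⟩ := QuotientGroup.mk_surjective y
  obtain ⟨C, hC⟩ := QuotientGroup.mk_surjective z
  -- every lift of a nontrivial element is non-scalar and has trace zero
  have lift_nonscalar : ∀ (M : GL (Fin 2) k) (w : Q), QuotientGroup.mk M = w → w ≠ 1 →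
      ∀ s : k, (M : Matrix (Fin 2) (Fin 2) k) ≠ s • 1 := by
    intro M w hM hw s hs
    exact hw (hM ▸ (QuotientGroup.eq_one_iff M).2 (aux_scalar_center M s hs))
  have lift_trace : ∀ (M : GL (Fin 2) k) (w : Q), QuotientGroup.mk M = w → w ≠ 1 →
      w * w = 1 →
      (M : Matrix (Fin 2) (Fin 2) k) 0 0 + (M : Matrix (Fin 2) (Fin 2) k) 1 1 = 0 := by
    intro M w hM hw hw2
    have hMM : QuotientGroup.mk (M * M) = (1 : Q) := by
      rw [QuotientGroup.mk_mul, hM, hw2]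
    have hmem : M * M ∈ Subgroup.center (GL (Fin 2) k) := (QuotientGroup.eq_one_iff _).1 hMM
    obtain ⟨r, hr⟩ := aux_center_scalar _ hmem
    rw [Units.val_mul] at hr
    exact aux_trace_zero _ r hr (lift_nonscalar M w hM hw)
  have htrA := lift_trace A x hA hx1 hx2
  have htrB := lift_trace B y hB hy1 hy2
  have htrC := lift_trace C z hC hz1 hz2
  -- two distinct commuting nontrivial involutions have anticommuting lifts
  have anticomm : ∀ (M N : GL (Fin 2) k) (u v : Q), QuotientGroup.mk M = u →
      QuotientGroup.mk N = v → u * v = v * u → u * u = 1 → u ≠ v →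
      ((M : Matrix (Fin 2) (Fin 2) k) 0 0 + (M : Matrix (Fin 2) (Fin 2) k) 1 1 = 0) →
      ((N : Matrix (Fin 2) (Fin 2) k) 0 0 + (N : Matrix (Fin 2) (Fin 2) k) 1 1 = 0) →
      (M : Matrix (Fin 2) (Fin 2) k) * N = -((N : Matrix (Fin 2) (Fin 2) k) * M) := by
    intro M N u v hM hN huv hu2 huv' htrM htrN
    have hmk : (QuotientGroup.mk (M * N) : Q) = QuotientGroup.mk (N * M) := by
      rw [QuotientGroup.mk_mul, QuotientGroup.mk_mul, hM, hN, huv]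
    have hmem := QuotientGroup.eq.1 hmk
    obtain ⟨r, hr⟩ := aux_center_scalar _ hmem
    have hNM : (N * M : GL (Fin 2) k) = (M * N) * ((M * N)⁻¹ * (N * M)) := by group
    have hval : (N : Matrix (Fin 2) (Fin 2) k) * M =
        r • ((M : Matrix (Fin 2) (Fin 2) k) * N) := by
      have h1 : ((N * M : GL (Fin 2) k) : Matrix (Fin 2) (Fin 2) k) =
          ((M * N : GL (Fin 2) k) : Matrix (Fin 2) (Fin 2) k) * (r • 1) := by
        rw [hNM, Units.val_mul, hr]
      calc (N : Matrix (Fin 2) (Fin 2) k) * M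
          = ((N * M : GL (Fin 2) k) : Matrix (Fin 2) (Fin 2) k) := (Units.val_mul _ _).symm
        _ = ((M * N : GL (Fin 2) k) : Matrix (Fin 2) (Fin 2) k) * (r • 1) := h1
        _ = r • ((M : Matrix (Fin 2) (Fin 2) k) * N) := by
            rw [Units.val_mul, Matrix.mul_smul, mul_one]
    have hdetMN : ((M : Matrix (Fin 2) (Fin 2) k) * N).det ≠ 0 := by
      have h1 : IsUnit ((M * N : GL (Fin 2) k) : Matrix (Fin 2) (Fin 2) k).det :=
        (Matrix.isUnit_iff_isUnit_det _).1 (M * N).isUnit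
      rw [Units.val_mul] at h1
      exact h1.ne_zero
    have hdet := congrArg Matrix.det hval
    rw [Matrix.det_smul, Matrix.det_mul, Matrix.det_mul, Fintype.card_fin] at hdet
    have hr2 : r * r = 1 := by
      have h2 : (r ^ 2 - 1) * ((M : Matrix (Fin 2) (Fin 2) k) * N).det = 0 := by
        rw [Matrix.det_mul]
        linear_combination -hdet
      rcases mul_eq_zero.1 h2 with h | h
      · have : r ^ 2 = 1 := by linear_combination h
        rw [← sq]; exact this
      · exact absurd h hdetMN
    rcases mul_self_eq_one_iff.1 hr2 with hre | hre
    · -- r = 1 : matrix-level commuting, contradiction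
      rw [hre, one_smul] at hval
      obtain ⟨s, hs⟩ := aux_comm_scalar _ _ htrM htrN hval.symm
      have hcen : (M * N : GL (Fin 2) k) ∈ Subgroup.center (GL (Fin 2) k) := by
        apply aux_scalar_center _ s
        rw [Units.val_mul]; exact hs
      have huv1 : u * v = 1 := by
        rw [← hM, ← hN, ← QuotientGroup.mk_mul]
        exact (QuotientGroup.eq_one_iff _).2 hcen
      have : u = v := by
        have h3 : u⁻¹ = v := inv_eq_of_mul_eq_one_right huv1
        have h4 : u⁻¹ = u := inv_eq_of_mul_eq_one_right hu2
        rw [← h3, h4]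
      exact absurd this huv'
    · rw [hre, neg_smul, one_smul] at hval
      rw [hval, neg_neg]
  -- commutativity in Q for the pairs
  have hxy_comm : x * y = y * x := hcomm _ a.2 _ b.2
  have hxz_comm : x * z = z * x := hcomm _ a.2 _ c.2
  have hyz_comm : y * z = z * y := hcomm _ b.2 _ c.2
  have hAB := anticomm A B x y hA hB hxy_comm hx2 hxy htrA htrB
  have hAC := anticomm A C x z hA hC hxz_comm hx2 (Ne.symm hzx) htrA htrC
  have hBC := anticomm B C y z hB hC hyz_comm hy2 (Ne.symm hzy) htrB htrC
  set Am := (A : Matrix (Fin 2) (Fin 2) k)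
  set Bm := (B : Matrix (Fin 2) (Fin 2) k)
  set Cm := (C : Matrix (Fin 2) (Fin 2) k)
  have hBA : Bm * Am = -(Am * Bm) := by rw [hAB, neg_neg]
  have hCA : Cm * Am = -(Am * Cm) := by rw [hAC, neg_neg]
  have hCB : Cm * Bm = -(Bm * Cm) := by rw [hBC, neg_neg]
  -- A*B has trace zero
  have htrD : (Am * Bm) 0 0 + (Am * Bm) 1 1 = 0 := by
    have e := Matrix.trace_mul_comm Am Bm
    rw [hBA] at e
    simp only [Matrix.trace_neg] at e
    have e2 : Matrix.trace (Am * Bm) = 0 := by linear_combination e / 2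
    rw [Matrix.trace_fin_two] at e2
    exact e2
  -- C commutes with A*B
  have hcommCD : Cm * (Am * Bm) = (Am * Bm) * Cm := by
    calc Cm * (Am * Bm) = Cm * Am * Bm := (mul_assoc _ _ _).symm
      _ = -(Am * Cm) * Bm := by rw [hCA]
      _ = -(Am * (Cm * Bm)) := by rw [neg_mul, mul_assoc]
      _ = -(Am * -(Bm * Cm)) := by rw [hCB]
      _ = Am * (Bm * Cm) := by rw [mul_neg, neg_neg]
      _ = Am * Bm * Cm := (mul_assoc _ _ _).symm
  obtain ⟨s, hs⟩ := aux_comm_scalar Cm (Am * Bm) htrC htrD hcommCD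
  have hcen : (C * (A * B) : GL (Fin 2) k) ∈ Subgroup.center (GL (Fin 2) k) := by
    apply aux_scalar_center _ s
    simp only [Units.val_mul]
    exact hs
  have hzxy1 : z * (x * y) = 1 := by
    rw [← hC, ← hA, ← hB, ← QuotientGroup.mk_mul, ← QuotientGroup.mk_mul]
    exact (QuotientGroup.eq_one_iff _).2 hcen
  have hzxy : z = x * y := by
    have h3 : z⁻¹ = x * y := inv_eq_of_mul_eq_one_right hzxy1
    have h4 : z⁻¹ = z := inv_eq_of_mul_eq_one_right hz2
    rw [← h3, h4]
  have hfinal : (c : Q) = ((a * b : G) : Q) := by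
    rw [Subgroup.coe_mul]
    exact hzxy
  exact hcab (Subtype.coe_injective hfinal)
end

section
/- Let K be a field of characteristic zero containing all roots of unity. A smooth conic C over K admitting an automorphism of finite order n ≥ 3 has a K-point. -/
/-!
The multiplier `c` of a similitude `A` of a nondegenerate ternary form is a square: taking
determinants in `Aᵀ Q A = c Q` gives `c³ = (det A)²`. Hence `g = A / √c` is an isometry of
`q`. Its `n`-th power is a scalar `e`, and `q (e v) = e² q v` forces `e² = 1`, so `g^(2n) = 1`.
Since `K` contains the `2n`-th roots of unity, `g` is diagonalizable over `K`, and an eigenvector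
with eigenvalue `z` satisfies `q v = z² q v`, so it is isotropic unless `z = ±1`. If every
eigenvalue were `±1`, then `g² = 1` and `A` would have order at most `2` in `PGL₃(K)`.
-/

open Polynomial
open scoped Matrix

namespace Module.End

variable {K V : Type*} [Field K] [AddCommGroup V] [Module K V] [FiniteDimensional K V]

theorem sq_eq_one_or_exists_hasEigenvalue_sq_ne_one {f : End K V} {p : K[X]}
    (hp : aeval f p = 0) (hsplit : p.Splits) (hsep : p.Separable) :
    f ^ 2 = 1 ∨ ∃ z, f.HasEigenvalue z ∧ z ^ 2 ≠ 1 := by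
  refine or_iff_not_imp_right.mpr fun h => ?_
  push Not at h
  have hdvd : minpoly K f ∣ p := minpoly.dvd K f hp
  have hroots : (minpoly K f).roots ≤ (X ^ 2 - C 1 : K[X]).roots := by
    rw [Multiset.le_iff_subset (nodup_roots (hsep.of_dvd hdvd))]
    intro z hz
    have hz2 := h z (hasEigenvalue_iff_isRoot.mpr (isRoot_of_mem_roots hz))
    rw [mem_roots (X_pow_sub_C_ne_zero two_pos 1)]
    simp [hz2]
  have hdvd2 : minpoly K f ∣ X ^ 2 - C 1 :=
    (hsplit.of_dvd hsep.ne_zero hdvd).dvd_of_roots_le_roots (minpoly.ne_zero_of_finite K f) hroots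
  simpa [sub_eq_zero] using minpoly.dvd_iff.mp hdvd2

end Module.End

namespace QuadraticMap

theorem polar_map_of_forall_map_eq_mul {R M : Type*} [CommRing R] [AddCommGroup M] [Module R M]
    {q : QuadraticForm R M} {g : M →ₗ[R] M} {c : R} (hg : ∀ v, q (g v) = c * q v) (x y : M) :
    polar q (g x) (g y) = c * polar q x y := by
  simp only [polar, ← map_add, hg]
  ring

theorem isSquare_of_forall_map_mulVec_eq_mul {K ι : Type*} [Field K] [Fintype ι]
    [DecidableEq ι] (hι : Odd (Fintype.card ι)) {q : QuadraticForm K (ι → K)}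
    (hq : (polarBilin q).Nondegenerate) {A : Matrix ι ι K} {c : K}
    (hA : ∀ v, q (A *ᵥ v) = c * q v) : IsSquare c := by
  set Q := LinearMap.BilinForm.toMatrix' (polarBilin q)
  have hgram : Aᵀ * Q * A = c • Q := by
    have h : LinearMap.BilinForm.comp (polarBilin q) (Matrix.toLin' A) (Matrix.toLin' A) =
        c • polarBilin q :=
      LinearMap.ext₂ (polar_map_of_forall_map_eq_mul (g := Matrix.toLin' A) hA)
    simpa using congrArg LinearMap.BilinForm.toMatrix' h
  have hQ : Q.det ≠ 0 :=
    Matrix.nondegenerate_iff_det_ne_zero.mp (LinearMap.BilinForm.nondegenerate_toMatrix'_iff.mpr hq)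
  have hdet : c ^ Fintype.card ι = A.det ^ 2 := by
    have h := congrArg Matrix.det hgram
    rw [Matrix.det_mul, Matrix.det_mul, Matrix.det_transpose, Matrix.det_smul] at h
    exact mul_right_cancel₀ hQ (by linear_combination -h)
  obtain ⟨j, hj⟩ := hι
  rcases eq_or_ne c 0 with rfl | hc
  · exact ⟨0, by simp⟩
  refine ⟨A.det / c ^ j, ?_⟩
  rw [hj] at hdet
  field_simp
  linear_combination hdet

variable {K V : Type*} [Field K] [AddCommGroup V] [Module K V] {q : QuadraticForm K V}
  {g : Module.End K V}

theorem map_pow_apply_of_isometry (hg : ∀ v, q (g v) = q v) (k : ℕ) (v : V) :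
    q ((g ^ k) v) = q v := by
  rw [Module.End.pow_apply]
  exact congrFun (Function.iterate_invariant (funext hg) k) v

theorem sq_eq_one_of_isometry_pow_eq_smul_one (hq : q ≠ 0) (hg : ∀ v, q (g v) = q v) {n : ℕ}
    {e : K} (hgn : g ^ n = e • 1) : e ^ 2 = 1 := by
  obtain ⟨v, hv⟩ : ∃ v, q v ≠ 0 := by
    by_contra! h
    exact hq (QuadraticMap.ext h)
  have h := map_pow_apply_of_isometry hg n v
  rw [hgn, LinearMap.smul_apply, Module.End.one_apply, q.map_smul, smul_eq_mul] at h
  exact mul_right_cancel₀ hv (by linear_combination h)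

theorem eq_zero_of_isometry_of_apply_eq_smul (hg : ∀ v, q (g v) = q v) {z : K} (hz : z ^ 2 ≠ 1)
    {v : V} (hv : g v = z • v) : q v = 0 := by
  have h := hg v
  rw [hv, q.map_smul, smul_eq_mul] at h
  exact (mul_eq_zero.mp (by linear_combination h : (z ^ 2 - 1) * q v = 0)).resolve_left
    (sub_ne_zero.mpr hz)

theorem exists_ne_zero_eq_zero_of_isometry [FiniteDimensional K V] (hg : ∀ v, q (g v) = q v)
    (hg2 : g ^ 2 ≠ 1) {p : K[X]} (hp : aeval g p = 0) (hsplit : p.Splits) (hsep : p.Separable) :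
    ∃ v, v ≠ 0 ∧ q v = 0 := by
  obtain ⟨z, hz, hz2⟩ :=
    (Module.End.sq_eq_one_or_exists_hasEigenvalue_sq_ne_one hp hsplit hsep).resolve_left hg2
  obtain ⟨v, hv⟩ := hz.exists_hasEigenvector
  exact ⟨v, hv.2, eq_zero_of_isometry_of_apply_eq_smul hg hz2 hv.apply_eq_smul⟩

end QuadraticMap

theorem QuotientGroup.orderOf_mk_dvd_iff {G : Type*} [Group G] {N : Subgroup G} [N.Normal]
    {g : G} {k : ℕ} : orderOf (g : G ⧸ N) ∣ k ↔ g ^ k ∈ N := by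
  rw [orderOf_dvd_iff_pow_eq_one, ← QuotientGroup.mk_pow, QuotientGroup.eq_one_iff]

theorem Matrix.GeneralLinearGroup.mem_center_iff_exists_toLinAlgEquiv'_eq_smul_one
    {K ι : Type*} [Field K] [Fintype ι] [DecidableEq ι] {A : GL ι K} :
    A ∈ Subgroup.center (GL ι K) ↔
      ∃ s : K, Matrix.toLinAlgEquiv' (A : Matrix ι ι K) = s • 1 := by
  simp only [mem_center_iff_val_mem_range_scalar, Set.mem_range, Matrix.scalar_apply,
    ← Matrix.smul_one_eq_diagonal]
  refine exists_congr fun s => ?_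
  rw [eq_comm, ← (Matrix.toLinAlgEquiv' (R := K) (n := ι)).injective.eq_iff, map_smul, map_one]

theorem conic_with_order_ge_three_auto_has_point
    (K : Type*) [Field K] [CharZero K]
    (hroots : ∀ m : ℕ, 0 < m → ∃ ζ : K, IsPrimitiveRoot ζ m)
    (q : QuadraticForm K (Fin 3 → K))
    (hsmooth : (QuadraticMap.polarBilin q).Nondegenerate)
    (A : GL (Fin 3) K)
    (hA : ∃ c : Kˣ, ∀ v : Fin 3 → K,
      q ((A : Matrix (Fin 3) (Fin 3) K).mulVec v) = (c : K) * q v)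
    (n : ℕ) (hn : 3 ≤ n)
    (horder : orderOf (QuotientGroup.mk A :
      GL (Fin 3) K ⧸ Subgroup.center (GL (Fin 3) K)) = n) :
    ∃ v : Fin 3 → K, v ≠ 0 ∧ q v = 0 := by
  open Matrix.GeneralLinearGroup in
  obtain ⟨c, hc⟩ := hA
  obtain ⟨t, hct⟩ := QuadraticMap.isSquare_of_forall_map_mulVec_eq_mul (by decide) hsmooth hc
  have ht : t ≠ 0 := by rintro rfl; simp at hct
  rcases eq_or_ne q 0 with rfl | hq
  · exact ⟨Pi.single 0 1, by simp, rfl⟩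
  set g : Module.End K (Fin 3 → K) :=
    t⁻¹ • Matrix.toLinAlgEquiv' (A : Matrix (Fin 3) (Fin 3) K)
  have hg : ∀ v, q (g v) = q v := fun v => by
    simp only [g, LinearMap.smul_apply, Matrix.toLinAlgEquiv'_apply, q.map_smul, hc, hct,
      smul_eq_mul]
    field_simp
  have hg_pow (k : ℕ) :
      g ^ k = t⁻¹ ^ k • Matrix.toLinAlgEquiv' (↑(A ^ k) : Matrix _ _ K) := by
    rw [_root_.smul_pow, Units.val_pow_eq_pow_val, map_pow]
  obtain ⟨s, hs⟩ := mem_center_iff_exists_toLinAlgEquiv'_eq_smul_one.mp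
    (QuotientGroup.orderOf_mk_dvd_iff.mp horder.dvd)
  have hgn : g ^ n = (t⁻¹ ^ n * s) • 1 := by rw [hg_pow, hs, smul_smul]
  have hg2 : g ^ 2 ≠ 1 := fun h => by
    have hA2 : A ^ 2 ∈ Subgroup.center (GL (Fin 3) K) :=
      mem_center_iff_exists_toLinAlgEquiv'_eq_smul_one.mpr
        ⟨t ^ 2, by rwa [hg_pow, inv_pow, inv_smul_eq_iff₀ (pow_ne_zero 2 ht)] at h⟩
    have := Nat.le_of_dvd two_pos (horder ▸ QuotientGroup.orderOf_mk_dvd_iff.mpr hA2)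
    omega
  obtain ⟨ζ, hζ⟩ := hroots (2 * n) (by omega)
  refine QuadraticMap.exists_ne_zero_eq_zero_of_isometry hg hg2 ?_ (X_pow_sub_one_splits hζ)
    (separable_X_pow_sub_C 1 (by norm_cast; omega) one_ne_zero)
  rw [map_sub, map_pow, aeval_X, aeval_C, pow_mul', hgn, _root_.smul_pow, one_pow,
    QuadraticMap.sq_eq_one_of_isometry_pow_eq_smul_one hq hg hgn, one_smul, map_one, sub_self]
end
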